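/- Let V be an n×p real matrix with VᵀV invertible, W ∈ ℝⁿ, θ̂ = (VᵀV)⁻¹VᵀW, and ε̂ = W − Vθ̂. Let Û be an n×q real matrix such that ÛᵀÛ is invertible and every column of Û lies in the column space of V. Let Y ∈ ℝⁿ, φ ∈ ℝ, and ω > 0, and define the conditional likelihood L(β) = ω^(−n/2) · exp(−(Y − Ûβ + ε̂φ)ᵀ(Y − Ûβ + ε̂φ)/(2ω)) for β ∈ ℝ^q. Then L attains its maximum over ℝ^q at the two-stage least squares estimator β̂^{2SLS} = (ÛᵀÛ)⁻¹ÛᵀY. -/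
import Mathlib


open Matrix Real

/-- With `θ̂ = (VᵀV)⁻¹VᵀW`, `ε̂ = W − Vθ̂`, and a second-stage design
matrix `Û` whose columns lie in the column space of `V` and with `ÛᵀÛ`
invertible, the conditional likelihood
`L(β) = ω^(−n/2) · exp(−(Y − Ûβ + ε̂φ)ᵀ(Y − Ûβ + ε̂φ)/(2ω))` attains its maximum
over `ℝ^q` at the 2SLS estimator `β̂^{2SLS} = (ÛᵀÛ)⁻¹ÛᵀY`. -/
theorem stmt3 (n p q : ℕ)
    (V : Matrix (Fin n) (Fin p) ℝ) (hV : IsUnit (Vᵀ * V))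
    (W : Fin n → ℝ)
    (θhat : Fin p → ℝ) (hθ : θhat = ((Vᵀ * V)⁻¹).mulVec (Vᵀ.mulVec W))
    (εhat : Fin n → ℝ) (hε : εhat = W - V.mulVec θhat)
    (Uhat : Matrix (Fin n) (Fin q) ℝ) (hU : IsUnit (Uhatᵀ * Uhat))
    (hcol : ∀ j : Fin q, ∃ c : Fin p → ℝ, (fun i => Uhat i j) = V.mulVec c)
    (Y : Fin n → ℝ) (φ ω : ℝ) (hω : 0 < ω)
    (L : (Fin q → ℝ) → ℝ)
    (hL : ∀ β : Fin q → ℝ,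
      L β = ω ^ (-(n : ℝ) / 2) *
        Real.exp (-((Y - Uhat.mulVec β + φ • εhat) ⬝ᵥ (Y - Uhat.mulVec β + φ • εhat)) /
          (2 * ω)))
    (β2sls : Fin q → ℝ)
    (hβ : β2sls = ((Uhatᵀ * Uhat)⁻¹).mulVec (Uhatᵀ.mulVec Y)) :
    ∀ β : Fin q → ℝ, L β ≤ L β2sls := by
  -- Vᵀ ε̂ = 0
  have hVε : Vᵀ.mulVec εhat = 0 := by
    subst hε hθ
    rw [Matrix.mulVec_sub, Matrix.mulVec_mulVec, Matrix.mulVec_mulVec,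
      Matrix.mul_nonsing_inv _ ((Matrix.isUnit_iff_isUnit_det _).mp hV),
      Matrix.one_mulVec, sub_self]
  -- Ûᵀ ε̂ = 0
  have hUε : Uhatᵀ.mulVec εhat = 0 := by
    funext j
    obtain ⟨c, hc⟩ := hcol j
    have h1 : Uhatᵀ.mulVec εhat j = (fun i => Uhat i j) ⬝ᵥ εhat := rfl
    rw [h1, hc, dotProduct_comm, dotProduct_mulVec, ← Matrix.mulVec_transpose, hVε]
    simp
  set Z : Fin n → ℝ := Y + φ • εhat with hZ
  -- normal equations
  have hnormal : Uhatᵀ.mulVec (Z - Uhat.mulVec β2sls) = 0 := by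
    rw [Matrix.mulVec_sub, hZ, Matrix.mulVec_add, Matrix.mulVec_smul, hUε, hβ,
      Matrix.mulVec_mulVec, Matrix.mulVec_mulVec,
      Matrix.mul_nonsing_inv _ ((Matrix.isUnit_iff_isUnit_det _).mp hU), Matrix.one_mulVec]
    simp
  intro β
  -- key quadratic inequality
  have key : (Z - Uhat.mulVec β2sls) ⬝ᵥ (Z - Uhat.mulVec β2sls) ≤
      (Z - Uhat.mulVec β) ⬝ᵥ (Z - Uhat.mulVec β) := by
    set r := Z - Uhat.mulVec β2sls with hr
    set d := Uhat.mulVec (β2sls - β) with hd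
    have hsplit : Z - Uhat.mulVec β = r + d := by
      rw [hr, hd, Matrix.mulVec_sub]; abel
    have hrd : r ⬝ᵥ d = 0 := by
      rw [hd, dotProduct_mulVec, ← Matrix.mulVec_transpose, hnormal]
      simp
    have hdd : 0 ≤ d ⬝ᵥ d :=
      Finset.sum_nonneg fun i _ => mul_self_nonneg _
    rw [hsplit, dotProduct_add, add_dotProduct, add_dotProduct, hrd,
      dotProduct_comm d r, hrd]
    linarith
  have hZβ : ∀ b : Fin q → ℝ, Y - Uhat.mulVec b + φ • εhat = Z - Uhat.mulVec b := by
    intro b; rw [hZ]; abel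
  rw [hL β, hL β2sls, hZβ, hZβ]
  apply mul_le_mul_of_nonneg_left _ (le_of_lt (Real.rpow_pos_of_pos hω _))
  apply Real.exp_le_exp.mpr
  gcongr
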